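/- Let n ≥ 1 be an integer, T₀ ≥ 0, and t ∈ ℝ with 0 ≤ t ≤ T₀/n. Set λ(t) = (T₀−nt)/(1+T₀−nt). Then for every z ∈ ℂⁿ with z ≠ 0 and all ξ, η ∈ ℂⁿ, the quantity (1+T₀−nt)·Σ_{k,j,i,q=1}^n R_{kj̄iq̄}(z,λ(t))·ξ^k·conj(ξ^j)·η^i·conj(η^q) is a nonnegative real number. That is, on the time interval [0, T₀/n] the solution ω(t) of the Chern-Ricci flow with initial metric ω₀ has non-negative holomorphic bisectional curvature. -/

import Mathlib

open Finset ComplexConjugate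

/-- `|z|² = Σₘ |zᵐ|²` for `z ∈ ℂⁿ`. -/
noncomputable def zsq {n : ℕ} (z : Fin n → ℂ) : ℝ := ∑ m, Complex.normSq (z m)

/-- The Chern curvature tensor `R_{kj̄iq̄}(z,λ)` of the Hermitian metric `ω_λ`
(Lemma 2.1 of the paper). -/
noncomputable def Rten {n : ℕ} (z : Fin n → ℂ) (lam : ℝ) (k j i q : Fin n) : ℂ :=
  (if i = q then 1 else 0)
      * ((if j = k then ((zsq z : ℝ) : ℂ) else 0) - conj (z k) * z j) / ((zsq z : ℝ) : ℂ) ^ 3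
    + (lam : ℂ) * ((if i = j then ((zsq z : ℝ) : ℂ) else 0) - conj (z i) * z j)
        * ((if k = q then ((zsq z : ℝ) : ℂ) else 0) - conj (z k) * z q) / ((zsq z : ℝ) : ℂ) ^ 4
    + ((lam ^ 2 - 2 * lam : ℝ) : ℂ) * conj (z i) * z q
        * ((if k = j then ((zsq z : ℝ) : ℂ) else 0) - conj (z k) * z j) / ((zsq z : ℝ) : ℂ) ^ 4

lemma quadKJ {n : ℕ} (F G : Fin n → Fin n → ℂ) :
    ∑ k, ∑ j, ∑ i, ∑ q, F k j * G i q = (∑ k, ∑ j, F k j) * (∑ i, ∑ q, G i q) := by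
  simp_rw [← Finset.mul_sum, ← Finset.sum_mul]

lemma quadIJ {n : ℕ} (F G : Fin n → Fin n → ℂ) :
    ∑ k, ∑ j, ∑ i, ∑ q, F i j * G k q = (∑ i, ∑ j, F i j) * (∑ k, ∑ q, G k q) := by
  simp_rw [← Finset.mul_sum, ← Finset.sum_mul]
  rw [← Finset.mul_sum, Finset.sum_comm]

lemma pairA {n : ℕ} (z w v : Fin n → ℂ) (c : ℂ) :
    ∑ a, ∑ b, ((if a = b then c else 0) - conj (z a) * z b) * (w a * conj (v b))
    = c * (∑ m, w m * conj (v m)) - (∑ m, conj (z m) * w m) * (∑ m, z m * conj (v m)) := by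
  simp only [sub_mul, Finset.sum_sub_distrib, ite_mul, zero_mul, Finset.sum_ite_eq,
    Finset.mem_univ, if_true]
  congr 1
  · rw [Finset.mul_sum]
  · have h : ∀ a b, conj (z a) * z b * (w a * conj (v b))
        = (conj (z a) * w a) * (z b * conj (v b)) := fun a b => by ring
    simp_rw [h, ← Finset.mul_sum, ← Finset.sum_mul]

lemma pairB {n : ℕ} (z w v : Fin n → ℂ) (c : ℂ) :
    ∑ a, ∑ b, ((if b = a then c else 0) - conj (z a) * z b) * (w a * conj (v b))
    = c * (∑ m, w m * conj (v m)) - (∑ m, conj (z m) * w m) * (∑ m, z m * conj (v m)) := by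
  simp only [sub_mul, Finset.sum_sub_distrib, ite_mul, zero_mul, Finset.sum_ite_eq',
    Finset.mem_univ, if_true]
  congr 1
  · rw [Finset.mul_sum]
  · have h : ∀ a b, conj (z a) * z b * (w a * conj (v b))
        = (conj (z a) * w a) * (z b * conj (v b)) := fun a b => by ring
    simp_rw [h, ← Finset.mul_sum, ← Finset.sum_mul]

/-- Closed form for the contracted curvature tensor. -/
lemma sum_Rten {n : ℕ} (z ξ η : Fin n → ℂ) (lam : ℝ) :
    ∑ k, ∑ j, ∑ i, ∑ q, Rten z lam k j i q * ξ k * conj (ξ j) * η i * conj (η q)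
    = (((zsq z : ℂ) * (∑ m, ξ m * conj (ξ m))
          - (∑ m, conj (z m) * ξ m) * (∑ m, z m * conj (ξ m)))
        * (∑ m, η m * conj (η m))) / (zsq z : ℂ) ^ 3
      + (lam : ℂ) * (((zsq z : ℂ) * (∑ m, η m * conj (ξ m))
            - (∑ m, conj (z m) * η m) * (∑ m, z m * conj (ξ m)))
          * ((zsq z : ℂ) * (∑ m, ξ m * conj (η m))
            - (∑ m, conj (z m) * ξ m) * (∑ m, z m * conj (η m)))) / (zsq z : ℂ) ^ 4
      + ((lam ^ 2 - 2 * lam : ℝ) : ℂ)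
          * ((∑ m, conj (z m) * η m) * (∑ m, z m * conj (η m)))
          * ((zsq z : ℂ) * (∑ m, ξ m * conj (ξ m))
            - (∑ m, conj (z m) * ξ m) * (∑ m, z m * conj (ξ m))) / (zsq z : ℂ) ^ 4 := by
  have e : ∀ k j i q : Fin n, Rten z lam k j i q * ξ k * conj (ξ j) * η i * conj (η q)
      = ((((if j = k then ((zsq z : ℝ) : ℂ) else 0) - conj (z k) * z j) * (ξ k * conj (ξ j)))
          * (((if i = q then (1 : ℂ) else 0)) * (η i * conj (η q)))) * (((zsq z : ℂ)) ^ 3)⁻¹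
        + ((((if i = j then ((zsq z : ℝ) : ℂ) else 0) - conj (z i) * z j) * (η i * conj (ξ j)))
            * ((((if k = q then ((zsq z : ℝ) : ℂ) else 0) - conj (z k) * z q)) * (ξ k * conj (η q))))
            * ((lam : ℂ) * (((zsq z : ℂ)) ^ 4)⁻¹)
        + ((((if k = j then ((zsq z : ℝ) : ℂ) else 0) - conj (z k) * z j) * (ξ k * conj (ξ j)))
            * ((conj (z i) * η i) * (z q * conj (η q))))
            * (((lam ^ 2 - 2 * lam : ℝ) : ℂ) * (((zsq z : ℂ)) ^ 4)⁻¹) := by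
    intro k j i q
    simp only [Rten]
    ring
  simp_rw [e, Finset.sum_add_distrib, ← Finset.sum_mul]
  rw [quadKJ, quadIJ, quadKJ, pairB z ξ ξ, pairA z η ξ, pairA z ξ η, pairA z ξ ξ]
  have g1 : ∑ i : Fin n, ∑ q : Fin n, (if i = q then (1:ℂ) else 0) * (η i * conj (η q))
      = ∑ m, η m * conj (η m) := by
    simp only [ite_mul, one_mul, zero_mul, Finset.sum_ite_eq, Finset.mem_univ, if_true]
  have g3 : ∑ i : Fin n, ∑ q : Fin n, (conj (z i) * η i) * (z q * conj (η q))
      = (∑ m, conj (z m) * η m) * (∑ m, z m * conj (η m)) := by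
    simp_rw [← Finset.mul_sum, ← Finset.sum_mul]
  rw [g1, g3]
  ring

/-- Cauchy–Schwarz for finite complex sums. -/
lemma cauchy_schwarz_sum {n : ℕ} (x y : Fin n → ℂ) :
    Complex.normSq (∑ m, conj (x m) * y m)
      ≤ (∑ m, Complex.normSq (x m)) * (∑ m, Complex.normSq (y m)) := by
  set X : EuclideanSpace ℂ (Fin n) := (WithLp.equiv 2 _).symm x with hX
  set Y : EuclideanSpace ℂ (Fin n) := (WithLp.equiv 2 _).symm y with hY
  have h := norm_inner_le_norm (𝕜 := ℂ) X Y
  have hx : ‖X‖ ^ 2 = ∑ m, Complex.normSq (x m) := by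
    rw [EuclideanSpace.norm_eq, Real.sq_sqrt (by positivity)]
    exact Finset.sum_congr rfl fun m _ => by
      simp [hX, Complex.sq_norm]
  have hy : ‖Y‖ ^ 2 = ∑ m, Complex.normSq (y m) := by
    rw [EuclideanSpace.norm_eq, Real.sq_sqrt (by positivity)]
    exact Finset.sum_congr rfl fun m _ => by
      simp [hY, Complex.sq_norm]
  have hi : (inner ℂ X Y : ℂ) = ∑ m, conj (x m) * y m := by
    rw [PiLp.inner_apply]
    exact Finset.sum_congr rfl fun m _ => by
      simp [hX, hY, RCLike.inner_apply, mul_comm]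
  calc Complex.normSq (∑ m, conj (x m) * y m)
      = ‖(inner ℂ X Y : ℂ)‖ ^ 2 := by rw [hi, ← Complex.sq_norm]
    _ ≤ (‖X‖ * ‖Y‖) ^ 2 := pow_le_pow_left₀ (norm_nonneg _) h 2
    _ = _ := by rw [mul_pow, hx, hy]

/-- For `n ≥ 1`, `T₀ ≥ 0` and `0 ≤ t ≤ T₀/n`, with
`λ(t) = (T₀−nt)/(1+T₀−nt)`, for every `z ≠ 0` and all `ξ, η ∈ ℂⁿ` the quantity
`(1+T₀−nt)·Σ R_{kj̄iq̄}(z,λ(t)) ξᵏ ξ̄ʲ ηⁱ η̄ᑫ` is a nonnegative real number: on `[0, T₀/n]`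
the Chern-Ricci flow solution `ω(t)` has non-negative holomorphic bisectional
curvature. -/
theorem flow_bisectional_nonneg (n : ℕ) (hn : 1 ≤ n) (T₀ : ℝ) (hT₀ : 0 ≤ T₀)
    (t : ℝ) (ht0 : 0 ≤ t) (ht1 : t ≤ T₀ / n) :
    ∀ z : Fin n → ℂ, z ≠ 0 → ∀ ξ η : Fin n → ℂ,
      ∃ r : ℝ, 0 ≤ r ∧
        ((1 + T₀ - n * t : ℝ) : ℂ)
            * ∑ k, ∑ j, ∑ i, ∑ q,
                Rten z ((T₀ - n * t) / (1 + T₀ - n * t)) k j i q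
                  * ξ k * conj (ξ j) * η i * conj (η q)
          = (r : ℂ) := by
  intro z hz ξ η
  have hn' : (0:ℝ) < n := by exact_mod_cast Nat.lt_of_lt_of_le Nat.zero_lt_one hn
  have hnt : (n:ℝ) * t ≤ T₀ := by
    have h := (le_div_iff₀ hn').mp ht1
    linarith [h, mul_comm t (n:ℝ)]
  have hs : 0 ≤ T₀ - (n:ℝ) * t := by linarith
  have hc1 : (0:ℝ) < 1 + T₀ - n * t := by linarith
  set lam : ℝ := (T₀ - n * t) / (1 + T₀ - n * t) with hlamdef
  have hlam0 : 0 ≤ lam := div_nonneg hs hc1.le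
  have hlam1 : lam ≤ 1 := by
    rw [hlamdef, div_le_one hc1]; linarith
  have hSpos : 0 < zsq z := by
    obtain ⟨m, hm⟩ := Function.ne_iff.mp hz
    exact Finset.sum_pos' (fun i _ => Complex.normSq_nonneg _)
      ⟨m, Finset.mem_univ m, Complex.normSq_pos.2 (by simpa using hm)⟩
  have hXr0 : (0:ℝ) ≤ ∑ m, Complex.normSq (ξ m) :=
    Finset.sum_nonneg fun m _ => Complex.normSq_nonneg _
  have hHr0 : (0:ℝ) ≤ ∑ m, Complex.normSq (η m) :=
    Finset.sum_nonneg fun m _ => Complex.normSq_nonneg _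
  have hAle : Complex.normSq (∑ m, conj (z m) * ξ m)
      ≤ zsq z * ∑ m, Complex.normSq (ξ m) := cauchy_schwarz_sum z ξ
  have hBle : Complex.normSq (∑ m, conj (z m) * η m)
      ≤ zsq z * ∑ m, Complex.normSq (η m) := cauchy_schwarz_sum z η
  refine ⟨(1 + T₀ - n * t) *
      (((zsq z * (∑ m, Complex.normSq (ξ m)) - Complex.normSq (∑ m, conj (z m) * ξ m))
          * ((∑ m, Complex.normSq (η m)) * zsq z
            + (lam ^ 2 - 2 * lam) * Complex.normSq (∑ m, conj (z m) * η m))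
        + lam * Complex.normSq ((zsq z : ℂ) * (∑ m, η m * conj (ξ m))
            - (∑ m, conj (z m) * η m) * conj (∑ m, conj (z m) * ξ m))) / (zsq z) ^ 4),
    ?_, ?_⟩
  · -- nonnegativity
    have hx : 0 ≤ zsq z * (∑ m, Complex.normSq (ξ m))
        - Complex.normSq (∑ m, conj (z m) * ξ m) := by linarith
    have hneg : lam ^ 2 - 2 * lam ≤ 0 := by nlinarith
    have hridge : 0 ≤ (∑ m, Complex.normSq (η m)) * zsq z
        + (lam ^ 2 - 2 * lam) * Complex.normSq (∑ m, conj (z m) * η m) := by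
      have h6 := mul_le_mul_of_nonpos_left hBle hneg
      nlinarith [mul_nonneg (mul_nonneg hSpos.le hHr0) (sq_nonneg (1 - lam))]
    exact mul_nonneg hc1.le (div_nonneg
      (add_nonneg (mul_nonneg hx hridge) (mul_nonneg hlam0 (Complex.normSq_nonneg _)))
      (pow_nonneg hSpos.le 4))
  · -- the identity
    rw [sum_Rten z ξ η lam]
    have hca : (∑ m, z m * conj (ξ m)) = conj (∑ m, conj (z m) * ξ m) := by
      rw [map_sum]; exact Finset.sum_congr rfl fun m _ => by simp [mul_comm]
    have hcb : (∑ m, z m * conj (η m)) = conj (∑ m, conj (z m) * η m) := by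
      rw [map_sum]; exact Finset.sum_congr rfl fun m _ => by simp [mul_comm]
    have hX : (∑ m, ξ m * conj (ξ m)) = ((∑ m, Complex.normSq (ξ m) : ℝ) : ℂ) := by
      simp_rw [Complex.mul_conj]; norm_cast
    have hH : (∑ m, η m * conj (η m)) = ((∑ m, Complex.normSq (η m) : ℝ) : ℂ) := by
      simp_rw [Complex.mul_conj]; norm_cast
    have hQ : (∑ m, ξ m * conj (η m)) = conj (∑ m, η m * conj (ξ m)) := by
      rw [map_sum]; exact Finset.sum_congr rfl fun m _ => by simp [mul_comm]
    rw [hca, hcb, hX, hH, hQ]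
    have haa : (∑ m, conj (z m) * ξ m) * conj (∑ m, conj (z m) * ξ m)
        = ((Complex.normSq (∑ m, conj (z m) * ξ m) : ℝ) : ℂ) := Complex.mul_conj _
    have hbb : (∑ m, conj (z m) * η m) * conj (∑ m, conj (z m) * η m)
        = ((Complex.normSq (∑ m, conj (z m) * η m) : ℝ) : ℂ) := Complex.mul_conj _
    have hW : ((zsq z : ℂ) * (∑ m, η m * conj (ξ m))
          - (∑ m, conj (z m) * η m) * conj (∑ m, conj (z m) * ξ m))
        * ((zsq z : ℂ) * conj (∑ m, η m * conj (ξ m))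
          - (∑ m, conj (z m) * ξ m) * conj (∑ m, conj (z m) * η m))
        = ((Complex.normSq ((zsq z : ℂ) * (∑ m, η m * conj (ξ m))
            - (∑ m, conj (z m) * η m) * conj (∑ m, conj (z m) * ξ m)) : ℝ) : ℂ) := by
      rw [← Complex.mul_conj]
      congr 1
      rw [map_sub, map_mul, map_mul, Complex.conj_conj, Complex.conj_ofReal]
      ring
    rw [haa, hbb, hW]
    have hS0 : ((zsq z : ℝ) : ℂ) ≠ 0 := Complex.ofReal_ne_zero.mpr hSpos.ne'
    push_cast
    field_simp
    ring
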